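/- arXiv:2403.04707 — 7 statements merged into one kernel-verified Lean document; each statement's English description precedes it below -/
import Mathlib

section
/- Let A ⊆ ℝⁿ be closed, a ∈ bdry A, ζ a unit vector, and r > 0 with B(a + rζ; r) ∩ A = ∅. Then for every x ∈ [a, a + rζ) (the half-open segment), the projection of x onto A is exactly {a}, i.e., a is the unique closest point of A to x. -/
/-!
Put `c = a + r • ζ` and `x = a + t • ζ`, so that `dist x a = t` and `dist x c = r - t`. Every
`b ∈ A` lies outside the open ball `B(c, r)`, hence `dist x b ≥ dist b c - dist x c ≥ t`, and `a`
attains this bound. Equality forces `x` onto the segment `[c, b]` at distance `t` from `b`, and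
since `x ≠ c` the direction of `b - x` is that of `x - c`, which pins `b` down as `a`.
-/

open Metric Set

/-- The set of closest points of `A` to `x`. -/
def projSet {n : ℕ} (A : Set (EuclideanSpace ℝ (Fin n)))
    (x : EuclideanSpace ℝ (Fin n)) : Set (EuclideanSpace ℝ (Fin n)) :=
  {a ∈ A | dist x a = Metric.infDist x A}

theorem eq_of_wbtw_of_wbtw_of_dist_eq {E : Type*} [NormedAddCommGroup E] [NormedSpace ℝ E]
    {c x a b : E} (hxc : x ≠ c) (ha : Wbtw ℝ c x a) (hb : Wbtw ℝ c x b)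
    (hab : dist x a = dist x b) : a = b := by
  have hray : SameRay ℝ (a - x) (b - x) :=
    ha.sameRay_vsub.symm.trans hb.sameRay_vsub fun h => absurd (sub_eq_zero.1 h) hxc
  have hnorm : ‖a - x‖ = ‖b - x‖ := by
    rw [← dist_eq_norm, ← dist_eq_norm, dist_comm, hab, dist_comm]
  exact sub_left_injective (hray.eq_of_norm_eq hnorm)

section BallAvoidingSet

variable {X : Type*} [PseudoMetricSpace X] {A : Set X} {a b c x : X} {r : ℝ}

theorem le_dist_of_ball_inter_eq_empty (hdisj : ball c r ∩ A = ∅) (hb : b ∈ A) :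
    r ≤ dist b c :=
  not_lt.1 fun h => Set.eq_empty_iff_forall_notMem.1 hdisj b ⟨mem_ball.2 h, hb⟩

theorem dist_le_dist_of_ball_inter_eq_empty (hdisj : ball c r ∩ A = ∅)
    (hx : dist x a + dist x c = r) (hb : b ∈ A) : dist x a ≤ dist x b := by
  have := le_dist_of_ball_inter_eq_empty hdisj hb
  linarith [dist_triangle b x c, dist_comm b x]

theorem infDist_eq_dist_of_ball_inter_eq_empty (haA : a ∈ A) (hdisj : ball c r ∩ A = ∅)
    (hx : dist x a + dist x c = r) : infDist x A = dist x a :=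
  le_antisymm (infDist_le_dist_of_mem haA)
    ((le_infDist ⟨a, haA⟩).2 fun _ hb => dist_le_dist_of_ball_inter_eq_empty hdisj hx hb)

end BallAvoidingSet

theorem projSet_eq_singleton_of_ball_inter_eq_empty {n : ℕ} {A : Set (EuclideanSpace ℝ (Fin n))}
    {a c x : EuclideanSpace ℝ (Fin n)} {r : ℝ} (haA : a ∈ A) (hdisj : ball c r ∩ A = ∅)
    (hx : dist x a + dist x c = r) (hxc : x ≠ c) : projSet A x = {a} := by
  have hinf := infDist_eq_dist_of_ball_inter_eq_empty haA hdisj hx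
  have hwbtw : ∀ b ∈ A, dist x b = dist x a → Wbtw ℝ c x b := fun b hb hxb => by
    have := le_dist_of_ball_inter_eq_empty hdisj hb
    rw [← dist_add_dist_eq_iff]
    linarith [dist_triangle b x c, dist_comm b x, dist_comm c x, dist_comm c b]
  ext b
  simp only [projSet, mem_ofPred_eq, mem_singleton_iff, hinf]
  constructor
  · rintro ⟨hb, hxb⟩
    exact eq_of_wbtw_of_wbtw_of_dist_eq hxc (hwbtw b hb hxb) (hwbtw a haA rfl) hxb
  · rintro rfl
    exact ⟨haA, rfl⟩

theorem stmt_2_general {n : ℕ} (A : Set (EuclideanSpace ℝ (Fin n))) (hAc : IsClosed A)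
    (a : EuclideanSpace ℝ (Fin n)) (ha : a ∈ frontier A)
    (ζ : EuclideanSpace ℝ (Fin n)) (hζ : ‖ζ‖ = 1) (r : ℝ)
    (hdisj : Metric.ball (a + r • ζ) r ∩ A = ∅) :
    ∀ t : ℝ, 0 ≤ t → t < r → projSet A (a + t • ζ) = {a} := by
  intro t ht htr
  have hxa : dist (a + t • ζ) a = t := by
    rw [dist_self_add_left, norm_smul, hζ, mul_one, Real.norm_of_nonneg ht]
  have hxc : dist (a + t • ζ) (a + r • ζ) = r - t := by
    rw [dist_add_left, dist_eq_norm, ← sub_smul, norm_smul, hζ, mul_one, Real.norm_eq_abs,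
      abs_of_neg (sub_neg.2 htr), neg_sub]
  refine projSet_eq_singleton_of_ball_inter_eq_empty (hAc.frontier_subset ha) hdisj
    (by rw [hxa, hxc]; ring) fun h => ?_
  rw [h, dist_self] at hxc
  linarith

theorem stmt_2 {n : ℕ} (A : Set (EuclideanSpace ℝ (Fin n))) (hAc : IsClosed A)
    (a : EuclideanSpace ℝ (Fin n)) (ha : a ∈ frontier A)
    (ζ : EuclideanSpace ℝ (Fin n)) (hζ : ‖ζ‖ = 1) (r : ℝ) (hr : 0 < r)
    (hdisj : Metric.ball (a + r • ζ) r ∩ A = ∅) :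
    ∀ t : ℝ, 0 ≤ t → t < r → projSet A (a + t • ζ) = {a} :=
  stmt_2_general A hAc a ha ζ hζ r hdisj
end

section
/- Let A ⊆ ℝⁿ be nonempty and closed, and let r : bdry A → (0, +∞) be continuous. Suppose that for every a ∈ bdry A and every unit proximal normal ζ ∈ N_A^P(a), the inequality ⟨ζ, x − a⟩ ≤ (1/(2r(a)))‖x − a‖² holds for all x ∈ A. Define ρ : Aᶜ → (0, +∞) by ρ(x) := min{ r(a)/2 : a ∈ proj_A(x) }. Then ρ is lower semicontinuous on Aᶜ (and the minimum defining ρ(x) is attained). -/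
open Metric Set

/-- The proximal normal cone to `A` at `a`. -/
def proxNormalCone {n : ℕ} (A : Set (EuclideanSpace ℝ (Fin n)))
    (a : EuclideanSpace ℝ (Fin n)) : Set (EuclideanSpace ℝ (Fin n)) :=
  {ζ | ∃ σ : ℝ, 0 ≤ σ ∧ ∀ y ∈ A, (inner ℝ ζ (y - a) : ℝ) ≤ σ * ‖y - a‖ ^ 2}

/-!
The metric projection onto a closed set is upper semicontinuous: if every closest point of `A`
to `x` lies in an open set `U`, so does every closest point to `y` for `y` near `x`. Indeed, the
points of `A` near `x` outside `U` form a compact set on which `dist x · - infDist x A` is bounded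
below by some `δ > 0`, while a closest point to `y` exceeds `infDist x A` by at most
`2 * dist x y`. Hence `x ↦ min {f a | a ∈ projSet A x}` is lower semicontinuous for any `f`
continuous on `frontier A`, the minimum being attained because `projSet A x` is compact.
-/

open Filter Topology

section ProjSet

variable {n : ℕ} {A : Set (EuclideanSpace ℝ (Fin n))}

lemma projSet_eq_inter_sphere (x : EuclideanSpace ℝ (Fin n)) :
    projSet A x = A ∩ sphere x (infDist x A) := by
  ext a
  simp only [projSet, mem_ofPred_eq, mem_inter_iff, mem_sphere, dist_comm a x]

lemma projSet_nonempty (hA : A.Nonempty) (hAc : IsClosed A) (x : EuclideanSpace ℝ (Fin n)) :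
    (projSet A x).Nonempty := by
  obtain ⟨a, ha, h⟩ := hAc.exists_infDist_eq_dist hA x
  exact ⟨a, ha, h.symm⟩

lemma isCompact_projSet (hAc : IsClosed A) (x : EuclideanSpace ℝ (Fin n)) :
    IsCompact (projSet A x) := by
  rw [projSet_eq_inter_sphere]
  exact (isCompact_sphere x _).inter_left hAc

lemma projSet_subset_frontier {x : EuclideanSpace ℝ (Fin n)} (hx : x ∉ A) :
    projSet A x ⊆ frontier A := by
  rintro a ⟨haA, hxa⟩
  have hd : infDist x A ≠ 0 := by
    intro h
    rw [h, dist_eq_zero] at hxa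
    exact hx (hxa ▸ haA)
  have hball : ball x (infDist x A) ⊆ Aᶜ := fun y hy => notMem_of_dist_lt_infDist (by
    rwa [mem_ball, dist_comm] at hy)
  rw [frontier_eq_closure_inter_closure]
  refine ⟨subset_closure haA, closure_mono hball ?_⟩
  rw [closure_ball x hd, mem_closedBall, dist_comm, hxa]

lemma eventually_projSet_subset (hAc : IsClosed A) {x : EuclideanSpace ℝ (Fin n)}
    {U : Set (EuclideanSpace ℝ (Fin n))} (hU : IsOpen U) (hxU : projSet A x ⊆ U) :
    ∀ᶠ y in 𝓝 x, projSet A y ⊆ U := by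
  set K := (A ∩ closedBall x (infDist x A + 1)) \ U
  have hK : IsCompact K := ((isCompact_closedBall _ _).inter_left hAc).diff hU
  have hgap : ∀ a ∈ K, 0 < dist x a - infDist x A := fun a ⟨⟨haA, _⟩, haU⟩ =>
    sub_pos.2 <| (infDist_le_dist_of_mem haA).lt_of_ne fun h => haU (hxU ⟨haA, h.symm⟩)
  obtain ⟨δ, hδ, hδK⟩ := hK.exists_forall_le' (by fun_prop) hgap
  filter_upwards [ball_mem_nhds x (half_pos (lt_min hδ one_pos))] with y hy a ⟨haA, hya⟩
  rw [mem_ball] at hy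
  have hclose : dist x a - infDist x A < min δ 1 := by
    have hinf := infDist_le_infDist_add_dist (x := y) (y := x) (s := A)
    have htri := dist_triangle x y a
    rw [dist_comm x y] at htri
    linarith
  by_contra haU
  have haK : a ∈ K :=
    ⟨⟨haA, by rw [mem_closedBall, dist_comm]; linarith [min_le_right δ 1]⟩, haU⟩
  linarith [hδK a haK, min_le_left δ 1]

variable {f : EuclideanSpace ℝ (Fin n) → ℝ}

lemma exists_mem_projSet_sInf_image_eq (hA : A.Nonempty) (hAc : IsClosed A)
    (hf : ContinuousOn f (frontier A)) {x : EuclideanSpace ℝ (Fin n)} (hx : x ∉ A) :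
    ∃ a ∈ projSet A x, sInf (f '' projSet A x) = f a ∧ ∀ b ∈ projSet A x, f a ≤ f b :=
  (isCompact_projSet hAc x).exists_sInf_image_eq_and_le (projSet_nonempty hA hAc x)
    (hf.mono (projSet_subset_frontier hx))

lemma lowerSemicontinuousOn_sInf_image_projSet (hA : A.Nonempty) (hAc : IsClosed A)
    (hf : ContinuousOn f (frontier A)) :
    LowerSemicontinuousOn (fun x => sInf (f '' projSet A x)) Aᶜ := by
  intro x hx c hc
  obtain ⟨a₀, -, ha₀, hmin⟩ := exists_mem_projSet_sInf_image_eq hA hAc hf hx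
  obtain ⟨V, hV, hVf⟩ := continuousOn_iff'.1 hf (Ioi c) isOpen_Ioi
  have hxV : projSet A x ⊆ V := fun a ha =>
    (hVf.le ⟨(hc.trans_eq ha₀).trans_le (hmin a ha), projSet_subset_frontier hx ha⟩).1
  filter_upwards [self_mem_nhdsWithin,
    nhdsWithin_le_nhds (eventually_projSet_subset hAc hV hxV)] with y hy hyV
  obtain ⟨a, ha, hay, -⟩ := exists_mem_projSet_sInf_image_eq hA hAc hf hy
  rw [hay]
  exact (hVf.ge ⟨hyV ha, projSet_subset_frontier hy ha⟩).1

end ProjSet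

theorem stmt_4_general {n : ℕ} (A : Set (EuclideanSpace ℝ (Fin n))) (hA : A.Nonempty)
    (hAc : IsClosed A) (r : EuclideanSpace ℝ (Fin n) → ℝ)
    (hrcont : ContinuousOn r (frontier A))
    (ρ : EuclideanSpace ℝ (Fin n) → ℝ)
    (hρ : ∀ x, ρ x = sInf ((fun a => r a / 2) '' projSet A x)) :
    LowerSemicontinuousOn ρ Aᶜ ∧ ∀ x ∈ Aᶜ, ∃ a ∈ projSet A x, ρ x = r a / 2 := by
  obtain rfl : ρ = fun x => sInf ((fun a => r a / 2) '' projSet A x) := funext hρ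
  have hf : ContinuousOn (fun a => r a / 2) (frontier A) := hrcont.div_const 2
  refine ⟨lowerSemicontinuousOn_sInf_image_projSet hA hAc hf, fun x hx => ?_⟩
  obtain ⟨a, ha, hxa, -⟩ := exists_mem_projSet_sInf_image_eq hA hAc hf hx
  exact ⟨a, ha, hxa⟩

theorem stmt_4 {n : ℕ} (A : Set (EuclideanSpace ℝ (Fin n))) (hA : A.Nonempty)
    (hAc : IsClosed A) (r : EuclideanSpace ℝ (Fin n) → ℝ)
    (hrpos : ∀ a ∈ frontier A, 0 < r a) (hrcont : ContinuousOn r (frontier A))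
    (hsphere : ∀ a ∈ frontier A, ∀ ζ ∈ proxNormalCone A a, ‖ζ‖ = 1 →
      ∀ x ∈ A, (inner ℝ ζ (x - a) : ℝ) ≤ (1 / (2 * r a)) * ‖x - a‖ ^ 2)
    (ρ : EuclideanSpace ℝ (Fin n) → ℝ)
    (hρ : ∀ x, ρ x = sInf ((fun a => r a / 2) '' projSet A x)) :
    LowerSemicontinuousOn ρ Aᶜ ∧ ∀ x ∈ Aᶜ, ∃ a ∈ projSet A x, ρ x = r a / 2 :=
  stmt_4_general A hA hAc r hrcont ρ hρ
end

section
/- Let x, y ∈ ℝⁿ with y ≠ x, let ρ_x > 0 and R > 0 satisfy ‖y − x‖ ≥ R, and define ρ* := ρ_x²‖y − x‖ / (‖y − x‖² + ρ_x² − R²) > 0. Then the open ball B(x + ρ*(y − x)/‖y − x‖; ρ*) is contained in B(x; ρ_x) ∪ B(y; R). -/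
/-!
The center `c = x + t • (y - x)` of the small ball lies on the segment `[x, y]`, and Stewart's
identity `(1 - t) ‖z - x‖² + t ‖z - y‖² = ‖z - c‖² + t (1 - t) ‖y - x‖²` shows that a point `z`
of `B(c; r)` outside `B(x; ρ)` satisfies `t ‖z - y‖² < t R²` as soon as
`r² + t (1 - t) ‖y - x‖² ≤ (1 - t) ρ² + t R²`. For `t = ρ_x² / (‖y - x‖² + ρ_x² - R²)` and
`r = ρ* = t ‖y - x‖` this condition holds with equality.
-/

open Metric Set

section Stewart

variable {E : Type*} [NormedAddCommGroup E] [InnerProductSpace ℝ E]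

theorem stewart_norm_sq (x y z : E) (t : ℝ) :
    (1 - t) * ‖z - x‖ ^ 2 + t * ‖z - y‖ ^ 2 =
      ‖z - (x + t • (y - x))‖ ^ 2 + t * (1 - t) * ‖y - x‖ ^ 2 := by
  have hzy : z - y = (z - x) - (y - x) := by abel
  have hzc : z - (x + t • (y - x)) = (z - x) - t • (y - x) := by abel
  rw [hzy, hzc, norm_sub_sq_real (z - x), norm_sub_sq_real (z - x), norm_smul, real_inner_smul_right,
    Real.norm_eq_abs, mul_pow, sq_abs]
  ring

theorem ball_add_smul_sub_subset_ball_union_ball {x y : E} {t r ρ R : ℝ}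
    (ht₀ : 0 ≤ t) (ht₁ : t ≤ 1) (hρ : 0 ≤ ρ) (hR : 0 ≤ R)
    (h : r ^ 2 + t * (1 - t) * ‖y - x‖ ^ 2 ≤ (1 - t) * ρ ^ 2 + t * R ^ 2) :
    ball (x + t • (y - x)) r ⊆ ball x ρ ∪ ball y R := by
  intro z hz
  rw [mem_ball, dist_eq_norm] at hz
  by_cases hzx : ‖z - x‖ < ρ
  · exact Or.inl (mem_ball_iff_norm.mpr hzx)
  have hzx_sq : (1 - t) * ρ ^ 2 ≤ (1 - t) * ‖z - x‖ ^ 2 :=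
    mul_le_mul_of_nonneg_left (pow_le_pow_left₀ hρ (not_lt.mp hzx) 2) (sub_nonneg.mpr ht₁)
  have hzc_sq : ‖z - (x + t • (y - x))‖ ^ 2 < r ^ 2 :=
    pow_lt_pow_left₀ hz (norm_nonneg _) two_ne_zero
  have hzy_sq : t * ‖z - y‖ ^ 2 < t * R ^ 2 := by
    linarith [stewart_norm_sq x y z t]
  have ht : 0 < t := lt_of_le_of_ne ht₀ (by rintro rfl; simp at hzy_sq)
  exact Or.inr (mem_ball_iff_norm.mpr
    (lt_of_pow_lt_pow_left₀ 2 hR (lt_of_mul_lt_mul_left hzy_sq ht.le)))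

end Stewart

theorem stmt_7_general {n : ℕ} (x y : EuclideanSpace ℝ (Fin n))
    (ρx R : ℝ) (hρx : 0 < ρx) (hR : 0 < R) (hyx : R ≤ ‖y - x‖) :
    Metric.ball
        (x + (ρx ^ 2 * ‖y - x‖ / (‖y - x‖ ^ 2 + ρx ^ 2 - R ^ 2)) •
          (‖y - x‖⁻¹ • (y - x)))
        (ρx ^ 2 * ‖y - x‖ / (‖y - x‖ ^ 2 + ρx ^ 2 - R ^ 2)) ⊆
      Metric.ball x ρx ∪ Metric.ball y R := by
  set d := ‖y - x‖
  set D := d ^ 2 + ρx ^ 2 - R ^ 2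
  have hd : 0 < d := hR.trans_le hyx
  have hRd : R ^ 2 ≤ d ^ 2 := pow_le_pow_left₀ hR.le hyx 2
  have hD : 0 < D := by have := pow_pos hρx 2; linarith
  set t := ρx ^ 2 / D with ht
  have htD : t * D = ρx ^ 2 := div_mul_cancel₀ _ hD.ne'
  have hcenter : (ρx ^ 2 * d / D) • (d⁻¹ • (y - x)) = t • (y - x) := by
    rw [smul_smul]
    congr 1
    rw [ht]
    field_simp
  rw [hcenter, show ρx ^ 2 * d / D = t * d by ring]
  refine ball_add_smul_sub_subset_ball_union_ball (by positivity) ?_ hρx.le hR.le ?_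
  · exact div_le_one_of_le₀ (by linarith) hD.le
  · linear_combination htD

theorem stmt_7 {n : ℕ} (x y : EuclideanSpace ℝ (Fin n)) (hxy : y ≠ x)
    (ρx R : ℝ) (hρx : 0 < ρx) (hR : 0 < R) (hyx : R ≤ ‖y - x‖) :
    Metric.ball
        (x + (ρx ^ 2 * ‖y - x‖ / (‖y - x‖ ^ 2 + ρx ^ 2 - R ^ 2)) •
          (‖y - x‖⁻¹ • (y - x)))
        (ρx ^ 2 * ‖y - x‖ / (‖y - x‖ ^ 2 + ρx ^ 2 - R ^ 2)) ⊆
      Metric.ball x ρx ∪ Metric.ball y R :=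
  stmt_7_general x y ρx R hρx hR hyx
end

section
/- Let x ∈ ℝⁿ and let (ω_n) be a sequence of unit vectors converging to a unit vector ω₀, and let (R_n) be a sequence of positive reals with R_n → +∞. Suppose Ω ⊆ ℝⁿ is a set with B̄(x + R_n ω_n; R_n) ⊆ Ω for all n. Then for every δ > 0, the closed ball B̄(x + δω₀; δ) is contained in ⋃ₙ B̄(x + R_n ω_n; R_n) ∪ {x} ⊆ Ω ∪ {x}; in particular every point v with ‖v − x − δω₀‖ < δ lies in some B̄(x + R_n ω_n; R_n). -/
/-!
Write `u = v - x`. For a unit vector `ω` and `r ≥ 0`, the point `v` lies in the closed ball of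
radius `r` around `x + r • ω` iff `‖u‖² ≤ 2 r ⟪u, ω⟫`. If `v ≠ x` lies in the `δ`-ball around
`x + δ • ω₀`, this gives `⟪u, ω₀⟫ > 0`; hence `⟪u, ω k⟫` stays bounded away from `0` for large `k`,
while `R k → ∞`, so `2 R k ⟪u, ω k⟫ → ∞` eventually exceeds `‖u‖²`.
-/

open Metric Set Filter
open scoped RealInnerProductSpace

variable {E : Type*} [NormedAddCommGroup E] [InnerProductSpace ℝ E]

theorem mem_closedBall_add_smul_self_iff {x v ω : E} (hω : ‖ω‖ = 1) {r : ℝ} (hr : 0 ≤ r) :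
    v ∈ closedBall (x + r • ω) r ↔ ‖v - x‖ ^ 2 ≤ 2 * r * ⟪v - x, ω⟫ := by
  rw [mem_closedBall, dist_eq_norm, ← sub_sub,
    ← pow_le_pow_iff_left₀ (norm_nonneg _) hr two_ne_zero, norm_sub_sq_real,
    real_inner_smul_right, norm_smul, hω, Real.norm_of_nonneg hr]
  constructor <;> intro h <;> linarith

theorem eventually_mem_closedBall_add_smul_self {ι : Type*} {l : Filter ι} {x v ω₀ : E}
    {ω : ι → E} {R : ι → ℝ} {δ : ℝ} (hω : ∀ k, ‖ω k‖ = 1) (hω₀ : ‖ω₀‖ = 1)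
    (hconv : Tendsto ω l (nhds ω₀)) (hRtop : Tendsto R l atTop) (hδ : 0 ≤ δ)
    (hv : v ∈ closedBall (x + δ • ω₀) δ) :
    ∀ᶠ k in l, v ∈ closedBall (x + R k • ω k) (R k) := by
  rw [mem_closedBall_add_smul_self_iff hω₀ hδ] at hv
  have hlarge : ∀ᶠ k in l, ‖v - x‖ ^ 2 ≤ 2 * R k * ⟪v - x, ω k⟫ := by
    rcases eq_or_ne v x with rfl | hvx
    · simp
    have hinner : 0 < ⟪v - x, ω₀⟫ := by
      have : 0 < ‖v - x‖ ^ 2 := pow_pos (norm_pos_iff.2 (sub_ne_zero.2 hvx)) 2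
      nlinarith
    have hto : Tendsto (fun k ↦ 2 * R k * ⟪v - x, ω k⟫) l atTop :=
      (hRtop.const_mul_atTop two_pos).atTop_mul_pos hinner (tendsto_const_nhds.inner hconv)
    exact hto.eventually_ge_atTop _
  filter_upwards [hlarge, hRtop.eventually_ge_atTop 0] with k hk hRk
  exact (mem_closedBall_add_smul_self_iff (hω k) hRk).2 hk

theorem stmt_11_general {n : ℕ} (x : EuclideanSpace ℝ (Fin n))
    (ω : ℕ → EuclideanSpace ℝ (Fin n)) (ω₀ : EuclideanSpace ℝ (Fin n))
    (hω : ∀ k, ‖ω k‖ = 1) (hω₀ : ‖ω₀‖ = 1)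
    (hconv : Tendsto ω atTop (nhds ω₀))
    (R : ℕ → ℝ) (hRtop : Tendsto R atTop atTop)
    (Ω : Set (EuclideanSpace ℝ (Fin n)))
    (hΩ : ∀ k, Metric.closedBall (x + R k • ω k) (R k) ⊆ Ω) :
    ∀ δ : ℝ, 0 < δ →
      Metric.closedBall (x + δ • ω₀) δ ⊆
        (⋃ k, Metric.closedBall (x + R k • ω k) (R k)) ∪ {x} ∧
      (⋃ k, Metric.closedBall (x + R k • ω k) (R k)) ∪ {x} ⊆ Ω ∪ {x} ∧
      ∀ v, ‖v - x - δ • ω₀‖ < δ → ∃ k, v ∈ Metric.closedBall (x + R k • ω k) (R k) := by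
  intro δ hδ
  have hball : ∀ v ∈ closedBall (x + δ • ω₀) δ, ∃ k, v ∈ closedBall (x + R k • ω k) (R k) :=
    fun v hv ↦
      (eventually_mem_closedBall_add_smul_self hω hω₀ hconv hRtop hδ.le hv).exists
  refine ⟨fun v hv ↦ Or.inl (mem_iUnion.2 (hball v hv)),
    union_subset_union_left _ (iUnion_subset hΩ), fun v hv ↦ hball v ?_⟩
  rw [mem_closedBall, dist_eq_norm, ← sub_sub]
  exact hv.le

theorem stmt_11 {n : ℕ} (x : EuclideanSpace ℝ (Fin n))
    (ω : ℕ → EuclideanSpace ℝ (Fin n)) (ω₀ : EuclideanSpace ℝ (Fin n))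
    (hω : ∀ k, ‖ω k‖ = 1) (hω₀ : ‖ω₀‖ = 1)
    (hconv : Tendsto ω atTop (nhds ω₀))
    (R : ℕ → ℝ) (hRpos : ∀ k, 0 < R k) (hRtop : Tendsto R atTop atTop)
    (Ω : Set (EuclideanSpace ℝ (Fin n)))
    (hΩ : ∀ k, Metric.closedBall (x + R k • ω k) (R k) ⊆ Ω) :
    ∀ δ : ℝ, 0 < δ →
      Metric.closedBall (x + δ • ω₀) δ ⊆
        (⋃ k, Metric.closedBall (x + R k • ω k) (R k)) ∪ {x} ∧
      (⋃ k, Metric.closedBall (x + R k • ω k) (R k)) ∪ {x} ⊆ Ω ∪ {x} ∧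
      ∀ v, ‖v - x - δ • ω₀‖ < δ → ∃ k, v ∈ Metric.closedBall (x + R k • ω k) (R k) :=
  stmt_11_general x ω ω₀ hω hω₀ hconv R hRtop Ω hΩ
end

section
/- Let A ⊆ ℝⁿ be nonempty and closed, and let r : bdry A → (0, +∞] be continuous (with the convention 1/(+∞) = 0). Suppose A satisfies the extended exterior r(·)-sphere condition. Then N_A^P(a) ≠ {0} for every a ∈ bdry A; more precisely, for each a ∈ bdry A there exists a unit vector ζ_a ∈ N_A^P(a) such that ⟨ζ_a, x − a⟩ ≤ (1/(2r(a)))‖x − a‖² for all x ∈ A. -/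
open Metric Set ENNReal

/-- `A` satisfies the extended exterior `r(·)`-sphere condition, where
`r : bdry A → (0, +∞]` is encoded with values in `ℝ≥0∞` and the proximal normal
inequality constant `1/(2 r a)` is `((2 * r a)⁻¹).toReal` (so `= 0` when `r a = ∞`). -/
def ExtExtSphere {n : ℕ} (A : Set (EuclideanSpace ℝ (Fin n)))
    (r : EuclideanSpace ℝ (Fin n) → ℝ≥0∞) : Prop :=
  ∀ a ∈ frontier A,
    (a ∈ frontier (interior A) →
      ∃ ζ, ‖ζ‖ = 1 ∧ ζ ∈ proxNormalCone A a ∧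
        ∀ x ∈ A, (inner ℝ ζ (x - a) : ℝ) ≤ ((2 * r a)⁻¹).toReal * ‖x - a‖ ^ 2) ∧
    (a ∉ frontier (interior A) →
      ∀ ζ, ‖ζ‖ = 1 → ζ ∈ proxNormalCone A a →
        ∀ x ∈ A, (inner ℝ ζ (x - a) : ℝ) ≤ ((2 * r a)⁻¹).toReal * ‖x - a‖ ^ 2)

/-!
If `a` lies on the boundary of `interior A`, the sphere condition itself supplies `ζ`. Otherwise
`a` has a neighbourhood missing `closure (interior A)`, where every unit proximal normal obeys the
sphere inequality. Boundary points carrying unit proximal normals (feet of nearest-point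
projections of exterior points) accumulate at `a`; their normals have a convergent subsequence on
the unit sphere, and continuity of `r` lets the inequality pass to the limit.
-/

open Filter Topology
open scoped RealInnerProductSpace

section NearestPoint

variable {E : Type*} [NormedAddCommGroup E] [InnerProductSpace ℝ E] {A : Set E} {b p : E}

theorem inner_sub_le_of_forall_dist_le (hp : ∀ y ∈ A, dist b p ≤ dist b y) {y : E}
    (hy : y ∈ A) : ⟪b - p, y - p⟫ ≤ ‖y - p‖ ^ 2 / 2 := by
  have h := pow_le_pow_left₀ dist_nonneg (hp y hy) 2
  rw [dist_eq_norm, dist_eq_norm, ← sub_sub_sub_cancel_right b y p,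
    norm_sub_sq_real (b - p) (y - p)] at h
  linarith

theorem mem_frontier_of_forall_dist_le (hpA : p ∈ A) (hbA : b ∉ A)
    (hp : ∀ y ∈ A, dist b p ≤ dist b y) : p ∈ frontier A := by
  refine ⟨subset_closure hpA, ?_⟩
  have hball : ball b (dist b p) ⊆ Aᶜ := fun y hy hyA =>
    (hp y hyA).not_gt (by rwa [mem_ball, dist_comm] at hy)
  have hbp : dist b p ≠ 0 := dist_ne_zero.2 (ne_of_mem_of_not_mem hpA hbA).symm
  rw [← mem_compl_iff, ← closure_compl]
  exact closure_mono hball (by rw [closure_ball b hbp]; exact mem_closedBall'.2 le_rfl)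

end NearestPoint

theorem inner_sub_le_of_tendsto {E ι : Type*} [NormedAddCommGroup E] [InnerProductSpace ℝ E]
    {l : Filter ι} [l.NeBot] {A : Set E} {ζ p : ι → E} {c : ι → ℝ} {ζ₀ a : E} {c₀ : ℝ}
    (hζ : Tendsto ζ l (𝓝 ζ₀)) (hp : Tendsto p l (𝓝 a)) (hc : Tendsto c l (𝓝 c₀))
    (h : ∀ᶠ i in l, ∀ x ∈ A, ⟪ζ i, x - p i⟫ ≤ c i * ‖x - p i‖ ^ 2) {x : E} (hx : x ∈ A) :
    ⟪ζ₀, x - a⟫ ≤ c₀ * ‖x - a‖ ^ 2 :=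
  le_of_tendsto_of_tendsto (hζ.inner (tendsto_const_nhds.sub hp))
    (hc.mul ((tendsto_const_nhds.sub hp).norm.pow 2)) (h.mono fun _ hi => hi x hx)

theorem ContinuousWithinAt.toReal_inv_two_mul {X : Type*} [TopologicalSpace X] {r : X → ℝ≥0∞}
    {s : Set X} {a : X} (hr : ContinuousWithinAt r s a) (ha : r a ≠ 0) :
    ContinuousWithinAt (fun x => ((2 * r x)⁻¹).toReal) s a := by
  have h2r : ContinuousWithinAt (fun x => 2 * r x) s a :=
    ENNReal.Tendsto.const_mul hr (Or.inr ofNat_ne_top)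
  exact (ENNReal.continuousAt_toReal (by simp [ha])).comp_continuousWithinAt
    (tendsto_inv_iff.2 h2r)

section ProximalNormal

variable {n : ℕ} {A : Set (EuclideanSpace ℝ (Fin n))}

theorem smul_sub_mem_proxNormalCone {b p : EuclideanSpace ℝ (Fin n)}
    (hp : ∀ y ∈ A, dist b p ≤ dist b y) {t : ℝ} (ht : 0 ≤ t) :
    t • (b - p) ∈ proxNormalCone A p := by
  refine ⟨t / 2, by positivity, fun y hy => ?_⟩
  calc ⟪t • (b - p), y - p⟫ = t * ⟪b - p, y - p⟫ := real_inner_smul_left _ _ _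
    _ ≤ t * (‖y - p‖ ^ 2 / 2) := by gcongr; exact inner_sub_le_of_forall_dist_le hp hy
    _ = t / 2 * ‖y - p‖ ^ 2 := by ring

theorem frontier_subset_closure_setOf_unit_mem_proxNormalCone (hA : IsClosed A) :
    frontier A ⊆ closure {p ∈ frontier A | ∃ ζ, ‖ζ‖ = 1 ∧ ζ ∈ proxNormalCone A p} := by
  intro a ha
  rw [Metric.mem_closure_iff]
  intro ε hε
  have haA : a ∈ A := hA.frontier_subset ha
  have ha' : a ∈ closure Aᶜ := by rw [closure_compl]; exact ha.2
  obtain ⟨b, hbA, hab⟩ := Metric.mem_closure_iff.1 ha' (ε / 2) (half_pos hε)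
  obtain ⟨p, hpA, hpb⟩ := hA.exists_infDist_eq_dist ⟨a, haA⟩ b
  have hp : ∀ y ∈ A, dist b p ≤ dist b y := fun y hy => hpb ▸ infDist_le_dist_of_mem hy
  have hbp : b - p ≠ 0 := sub_ne_zero.2 (ne_of_mem_of_not_mem hpA hbA).symm
  refine ⟨p, ⟨mem_frontier_of_forall_dist_le hpA hbA hp, ‖b - p‖⁻¹ • (b - p),
    norm_smul_inv_norm hbp, smul_sub_mem_proxNormalCone hp (by positivity)⟩, ?_⟩
  calc dist a p ≤ dist a b + dist b p := dist_triangle _ _ _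
    _ ≤ dist a b + dist b a := by gcongr; exact hp a haA
    _ < ε := by rw [dist_comm b a]; linarith

theorem exists_unit_inner_sub_le_of_notMem_frontier_interior
    {r : EuclideanSpace ℝ (Fin n) → ℝ≥0∞} (hA : IsClosed A) (hext : ExtExtSphere A r)
    {a : EuclideanSpace ℝ (Fin n)} (ha : a ∈ frontier A) (hra : r a ≠ 0) (hr : ContinuousWithinAt r (frontier A) a)
    (hfi : a ∉ frontier (interior A)) :
    ∃ ζ, ‖ζ‖ = 1 ∧ ∀ x ∈ A, ⟪ζ, x - a⟫ ≤ ((2 * r a)⁻¹).toReal * ‖x - a‖ ^ 2 := by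
  have ha' : a ∉ closure (interior A) := fun h => hfi ⟨h, by rw [interior_interior]; exact ha.2⟩
  obtain ⟨p, hp, hpa⟩ :=
    mem_closure_iff_seq_limit.1 (frontier_subset_closure_setOf_unit_mem_proxNormalCone hA ha)
  choose ζ hζ using fun k => (hp k).2
  obtain ⟨ζ₀, hζ₀, φ, hφ, hζφ⟩ := (isCompact_sphere (0 : EuclideanSpace ℝ (Fin n)) 1).tendsto_subseq
    (x := ζ) fun k => mem_sphere_zero_iff_norm.2 (hζ k).1
  have hpφ : Tendsto (p ∘ φ) atTop (𝓝 a) := hpa.comp hφ.tendsto_atTop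
  have hc : Tendsto (fun k => ((2 * r (p (φ k)))⁻¹).toReal) atTop (𝓝 ((2 * r a)⁻¹).toReal) :=
    (hr.toReal_inv_two_mul hra).tendsto.comp
      (tendsto_nhdsWithin_iff.2 ⟨hpφ, .of_forall fun k => (hp (φ k)).1⟩)
  have hfar : ∀ᶠ k in atTop, p (φ k) ∉ closure (interior A) :=
    hpφ.eventually (isClosed_closure.isOpen_compl.mem_nhds ha')
  refine ⟨ζ₀, mem_sphere_zero_iff_norm.1 hζ₀, fun x hx => inner_sub_le_of_tendsto hζφ hpφ hc
    (hfar.mono fun k hk => ?_) hx⟩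
  exact (hext _ (hp (φ k)).1).2 (fun h => hk h.1) _ (hζ (φ k)).1 (hζ (φ k)).2

end ProximalNormal

theorem stmt_12_general {n : ℕ} (A : Set (EuclideanSpace ℝ (Fin n)))
    (hAc : IsClosed A) (r : EuclideanSpace ℝ (Fin n) → ℝ≥0∞)
    (hrpos : ∀ a ∈ frontier A, 0 < r a) (hrcont : ContinuousOn r (frontier A))
    (hext : ExtExtSphere A r) :
    ∀ a ∈ frontier A,
      proxNormalCone A a ≠ {0} ∧
      ∃ ζ, ‖ζ‖ = 1 ∧ ζ ∈ proxNormalCone A a ∧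
        ∀ x ∈ A, (inner ℝ ζ (x - a) : ℝ) ≤ ((2 * r a)⁻¹).toReal * ‖x - a‖ ^ 2 := by
  intro a ha
  obtain ⟨ζ, hζ, hζA⟩ : ∃ ζ, ‖ζ‖ = 1 ∧
      ∀ x ∈ A, ⟪ζ, x - a⟫ ≤ ((2 * r a)⁻¹).toReal * ‖x - a‖ ^ 2 := by
    by_cases hfi : a ∈ frontier (interior A)
    · obtain ⟨ζ, hζ, -, hζA⟩ := (hext a ha).1 hfi
      exact ⟨ζ, hζ, hζA⟩
    · exact exists_unit_inner_sub_le_of_notMem_frontier_interior hAc hext ha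
        (hrpos a ha).ne' (hrcont a ha) hfi
  have hζN : ζ ∈ proxNormalCone A a := ⟨_, toReal_nonneg, hζA⟩
  refine ⟨fun h0 => ?_, ζ, hζ, hζN, hζA⟩
  rw [h0, mem_singleton_iff] at hζN
  simp [hζN] at hζ

theorem stmt_12 {n : ℕ} (A : Set (EuclideanSpace ℝ (Fin n))) (hA : A.Nonempty)
    (hAc : IsClosed A) (r : EuclideanSpace ℝ (Fin n) → ℝ≥0∞)
    (hrpos : ∀ a ∈ frontier A, 0 < r a) (hrcont : ContinuousOn r (frontier A))
    (hext : ExtExtSphere A r) :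
    ∀ a ∈ frontier A,
      proxNormalCone A a ≠ {0} ∧
      ∃ ζ, ‖ζ‖ = 1 ∧ ζ ∈ proxNormalCone A a ∧
        ∀ x ∈ A, (inner ℝ ζ (x - a) : ℝ) ≤ ((2 * r a)⁻¹).toReal * ‖x - a‖ ^ 2 :=
  stmt_12_general A hAc r hrpos hrcont hext
end

section
/- The set of boundary points of a nonempty closed set A ⊆ ℝⁿ admitting a nonzero proximal normal is dense in bdry A: for every a ∈ bdry A and ε > 0, there exists b ∈ bdry A with ‖b − a‖ < ε and N_A^P(b) ≠ {0}. -/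
/-!
Points outside `A` accumulate at every boundary point `a`. For such a point `x` close to `a`, a
nearest point `b` of `A` lies within `2‖x - a‖` of `a`, it is on the boundary because the open
ball around `x` through `b` misses `A`, and `x - b ≠ 0` is a proximal normal at `b`.
-/

open Metric Set

theorem sub_mem_proxNormalCone_of_forall_dist_le {n : ℕ} {A : Set (EuclideanSpace ℝ (Fin n))}
    {x b : EuclideanSpace ℝ (Fin n)} (hb : ∀ y ∈ A, dist x b ≤ dist x y) :
    x - b ∈ proxNormalCone A b := by
  refine ⟨1 / 2, by norm_num, fun y hy => ?_⟩
  have hdist : ‖x - b‖ ^ 2 ≤ ‖x - y‖ ^ 2 := by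
    gcongr
    simpa only [dist_eq_norm] using hb y hy
  have hexpand : ‖x - y‖ ^ 2 = ‖x - b‖ ^ 2 - 2 * inner ℝ (x - b) (y - b) + ‖y - b‖ ^ 2 := by
    rw [show x - y = (x - b) - (y - b) by abel, norm_sub_sq_real]
  linarith

theorem mem_frontier_of_forall_dist_le_s13 {E : Type*} [NormedAddCommGroup E] [NormedSpace ℝ E]
    {A : Set E} {x b : E} (hbA : b ∈ A) (hxA : x ∉ A) (hb : ∀ y ∈ A, dist x b ≤ dist x y) :
    b ∈ frontier A := by
  rw [frontier_eq_closure_inter_closure]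
  refine ⟨subset_closure hbA, ?_⟩
  have hball : ball x (dist x b) ⊆ Aᶜ := fun y hy hyA => (hb y hyA).not_gt (mem_ball'.1 hy)
  have hpos : dist x b ≠ 0 := dist_ne_zero.2 fun h => hxA (h ▸ hbA)
  exact closure_mono hball (closure_ball x hpos ▸ mem_closedBall'.2 le_rfl)

theorem stmt_13_general {n : ℕ} (A : Set (EuclideanSpace ℝ (Fin n))) (hAc : IsClosed A) :
    ∀ a ∈ frontier A, ∀ ε : ℝ, 0 < ε →
      ∃ b ∈ frontier A, ‖b - a‖ < ε ∧ proxNormalCone A b ≠ {0} := by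
  intro a ha ε hε
  have haA : a ∈ A := hAc.frontier_subset ha
  obtain ⟨x, hxA, hxa⟩ : ∃ x ∈ Aᶜ, dist a x < ε / 2 :=
    Metric.mem_closure_iff.1 (frontier_subset_closure (frontier_compl A ▸ ha)) _ (half_pos hε)
  obtain ⟨b, hbA, hbx⟩ := hAc.exists_infDist_eq_dist ⟨a, haA⟩ x
  have hb : ∀ y ∈ A, dist x b ≤ dist x y := fun y hy => hbx ▸ infDist_le_dist_of_mem hy
  refine ⟨b, mem_frontier_of_forall_dist_le_s13 hbA hxA hb, ?_, fun h => ?_⟩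
  · calc ‖b - a‖ = dist b a := (dist_eq_norm b a).symm
      _ ≤ dist x b + dist x a := dist_triangle_left b a x
      _ < ε := by linarith [hb a haA, dist_comm a x]
  · have hzero : x - b ∈ ({0} : Set _) := h ▸ sub_mem_proxNormalCone_of_forall_dist_le hb
    exact hxA (sub_eq_zero.1 hzero ▸ hbA)

theorem stmt_13 {n : ℕ} (A : Set (EuclideanSpace ℝ (Fin n))) (hA : A.Nonempty)
    (hAc : IsClosed A) :
    ∀ a ∈ frontier A, ∀ ε : ℝ, 0 < ε →
      ∃ b ∈ frontier A, ‖b - a‖ < ε ∧ proxNormalCone A b ≠ {0} :=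
  stmt_13_general A hAc
end

section
/- Let A ⊆ ℝⁿ be nonempty and closed, and r : bdry A → (0, +∞) continuous. Define bdry_r(int A) := {a ∈ bdry(int A) : ∃ unit ζ ∈ N_A^P(a) with ρ(a, ζ) ≥ r(a)}, where ρ(a,ζ) := sup{ρ > 0 : B(a + ρζ; ρ) ∩ A = ∅}. Then bdry_r(int A) is a closed subset of ℝⁿ. -/
/-!
For a unit vector `ζ` and `ρ > 0`, the ball `B(a + ρζ; ρ)` misses `A` exactly when
`2ρ⟨ζ, x - a⟩ ≤ ‖x - a‖²` for every `x ∈ A`. Hence `ρ(a, ζ) ≥ r(a)` is this family of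
inequalities with `ρ = r(a)`, which by itself makes `ζ` a proximal normal. The inequalities are
closed conditions on `(a, ζ) ∈ bdry(int A) × S^{n-1}` since `r` is continuous there, and
projecting a closed set along the compact sphere gives a closed set.
-/

open Metric Set ENNReal

/-- `ρ(a, ζ)`: the supremum (in `ℝ≥0∞`) of the radii `ρ > 0` such that the open
ball `B(a + ρζ; ρ)` is disjoint from `A`. -/
noncomputable def rhoSup {n : ℕ} (A : Set (EuclideanSpace ℝ (Fin n)))
    (a ζ : EuclideanSpace ℝ (Fin n)) : ℝ≥0∞ :=
  ⨆ ρ ∈ {ρ : ℝ | 0 < ρ ∧ Metric.ball (a + ρ • ζ) ρ ∩ A = ∅}, ENNReal.ofReal ρ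

section Projection

variable {X Y : Type*} [TopologicalSpace X] [TopologicalSpace Y]

theorem IsClosed.image_fst_of_subset_prod_isCompact {K : Set (X × Y)} (hK : IsClosed K)
    {S : Set Y} (hS : IsCompact S) (hKS : K ⊆ univ ×ˢ S) : IsClosed (Prod.fst '' K) := by
  have : CompactSpace S := isCompact_iff_compactSpace.mp hS
  let e : X × S → X × Y := Prod.map id Subtype.val
  have hK' : IsClosed (e ⁻¹' K) := hK.preimage (by fun_prop)
  convert isClosedMap_fst_of_compactSpace _ hK' using 1
  ext x
  constructor
  · rintro ⟨⟨x, y⟩, hxy, rfl⟩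
    exact ⟨(x, ⟨y, (hKS hxy).2⟩), hxy, rfl⟩
  · rintro ⟨⟨x, y⟩, hxy, rfl⟩
    exact ⟨e (x, y), hxy, rfl⟩

end Projection

section ProximalBall

variable {E : Type*} [NormedAddCommGroup E] [InnerProductSpace ℝ E]

/-- `ρ` is a proximal radius of `A` at `a` in the direction `ζ`: the paper's
`⟨ζ, x - a⟩ ≤ ‖x - a‖² / (2ρ)` for `x ∈ A`, written without division. -/
def IsProximalRadius (A : Set E) (a ζ : E) (ρ : ℝ) : Prop :=
  ∀ x ∈ A, 2 * ρ * inner ℝ ζ (x - a) ≤ ‖x - a‖ ^ 2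

theorem mem_ball_add_smul_iff {a ζ x : E} (hζ : ‖ζ‖ = 1) {ρ : ℝ} (hρ : 0 < ρ) :
    x ∈ ball (a + ρ • ζ) ρ ↔ ‖x - a‖ ^ 2 < 2 * ρ * inner ℝ ζ (x - a) := by
  have hsq : ‖x - (a + ρ • ζ)‖ ^ 2 = ‖x - a‖ ^ 2 - 2 * ρ * inner ℝ ζ (x - a) + ρ ^ 2 := by
    rw [sub_add_eq_sub_sub, norm_sub_sq_real, real_inner_smul_right, real_inner_comm,
      norm_smul, hζ, Real.norm_of_nonneg hρ.le]
    ring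
  rw [mem_ball, dist_eq_norm, ← sq_lt_sq₀ (norm_nonneg _) hρ.le, hsq]
  constructor <;> intro h <;> linarith

theorem ball_add_smul_inter_eq_empty_iff {A : Set E} {a ζ : E} (hζ : ‖ζ‖ = 1) {ρ : ℝ}
    (hρ : 0 < ρ) : ball (a + ρ • ζ) ρ ∩ A = ∅ ↔ IsProximalRadius A a ζ ρ := by
  simp only [eq_empty_iff_forall_notMem, mem_inter_iff, not_and', IsProximalRadius,
    mem_ball_add_smul_iff hζ hρ, not_lt]

theorem isClosed_setOf_exists_isProximalRadius [ProperSpace E] (A : Set E) {F : Set E}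
    (hF : IsClosed F) {r : E → ℝ} (hr : ContinuousOn r F) :
    IsClosed {a ∈ F | ∃ ζ ∈ sphere (0 : E) 1, IsProximalRadius A a ζ (r a)} := by
  let K : Set (E × E) := (F ×ˢ sphere 0 1) ∩
    (fun p (x : A) => ‖(x : E) - p.1‖ ^ 2 - 2 * r p.1 * inner ℝ p.2 ((x : E) - p.1)) ⁻¹'
      univ.pi fun _ => Ici 0
  have hK : IsClosed K := by
    refine ContinuousOn.preimage_isClosed_of_isClosed ?_ (hF.prod isClosed_sphere)
      (isClosed_set_pi fun _ _ => isClosed_Ici)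
    have hr' : ContinuousOn (fun p : E × E => r p.1) (F ×ˢ sphere 0 1) :=
      hr.comp continuousOn_fst fun p hp => hp.1
    exact continuousOn_pi.mpr fun x =>
      ((continuousOn_const.sub continuousOn_fst).norm.pow 2).sub
        ((continuousOn_const.mul hr').mul
          (continuousOn_snd.inner (continuousOn_const.sub continuousOn_fst)))
  convert hK.image_fst_of_subset_prod_isCompact (isCompact_sphere 0 1)
    (fun p hp => ⟨mem_univ _, hp.1.2⟩) using 1
  ext a
  simp [K, IsProximalRadius, Pi.le_def, and_assoc]

end ProximalBall

theorem IsProximalRadius.mem_proxNormalCone {n : ℕ} {A : Set (EuclideanSpace ℝ (Fin n))}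
    {a ζ : EuclideanSpace ℝ (Fin n)} {ρ : ℝ} (h : IsProximalRadius A a ζ ρ) (hρ : 0 < ρ) :
    ζ ∈ proxNormalCone A a := by
  refine ⟨(2 * ρ)⁻¹, by positivity, fun y hy => ?_⟩
  rw [← div_eq_inv_mul, le_div_iff₀' (by positivity)]
  exact h y hy

theorem ofReal_le_rhoSup_iff {n : ℕ} {A : Set (EuclideanSpace ℝ (Fin n))}
    {a ζ : EuclideanSpace ℝ (Fin n)} (hζ : ‖ζ‖ = 1) {ρ : ℝ} (hρ : 0 < ρ) :
    ENNReal.ofReal ρ ≤ rhoSup A a ζ ↔ IsProximalRadius A a ζ ρ := by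
  refine ⟨fun h x hx => ?_, fun h => ?_⟩
  · by_contra! hlt
    set t := inner ℝ ζ (x - a)
    -- `x` lies in every ball `B(a + ρ'ζ; ρ')` with `ρ' > ‖x - a‖² / (2t)`, and some admissible
    -- `ρ'` is that large.
    have ht : 0 < t := by nlinarith [sq_nonneg ‖x - a‖]
    have hs : ENNReal.ofReal (‖x - a‖ ^ 2 / (2 * t)) < rhoSup A a ζ := by
      refine lt_of_lt_of_le ((ENNReal.ofReal_lt_ofReal_iff hρ).mpr ?_) h
      rw [div_lt_iff₀ (by positivity)]
      linarith
    obtain ⟨ρ', ⟨hρ', hball⟩, hlt'⟩ := lt_biSup_iff.mp hs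
    have hsρ' : ‖x - a‖ ^ 2 / (2 * t) < ρ' := (ENNReal.ofReal_lt_ofReal_iff hρ').mp hlt'
    rw [div_lt_iff₀ (by positivity)] at hsρ'
    have := (ball_add_smul_inter_eq_empty_iff hζ hρ').mp hball x hx
    linarith
  · exact le_iSup₂ (f := fun ρ _ => ENNReal.ofReal ρ) ρ
      ⟨hρ, (ball_add_smul_inter_eq_empty_iff hζ hρ).mpr h⟩

theorem stmt_17_general {n : ℕ} (A : Set (EuclideanSpace ℝ (Fin n)))
    (r : EuclideanSpace ℝ (Fin n) → ℝ)
    (hrpos : ∀ a ∈ frontier A, 0 < r a) (hrcont : ContinuousOn r (frontier A)) :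
    IsClosed {a ∈ frontier (interior A) |
      ∃ ζ, ‖ζ‖ = 1 ∧ ζ ∈ proxNormalCone A a ∧
        ENNReal.ofReal (r a) ≤ rhoSup A a ζ} := by
  have hfrontier : frontier (interior A) ⊆ frontier A := frontier_interior_subset
  refine (congrArg IsClosed (Set.ext fun a => ?_)).mpr
    (isClosed_setOf_exists_isProximalRadius A isClosed_frontier (hrcont.mono hfrontier))
  refine and_congr_right fun ha => exists_congr fun ζ => ?_
  have hra : 0 < r a := hrpos a (hfrontier ha)
  rw [mem_sphere_zero_iff_norm]
  constructor
  · rintro ⟨hζ, -, hρ⟩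
    exact ⟨hζ, (ofReal_le_rhoSup_iff hζ hra).mp hρ⟩
  · rintro ⟨hζ, hρ⟩
    exact ⟨hζ, hρ.mem_proxNormalCone hra, (ofReal_le_rhoSup_iff hζ hra).mpr hρ⟩

theorem stmt_17 {n : ℕ} (A : Set (EuclideanSpace ℝ (Fin n))) (hA : A.Nonempty)
    (hAc : IsClosed A) (r : EuclideanSpace ℝ (Fin n) → ℝ)
    (hrpos : ∀ a ∈ frontier A, 0 < r a) (hrcont : ContinuousOn r (frontier A)) :
    IsClosed {a ∈ frontier (interior A) |
      ∃ ζ, ‖ζ‖ = 1 ∧ ζ ∈ proxNormalCone A a ∧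
        ENNReal.ofReal (r a) ≤ rhoSup A a ζ} :=
  stmt_17_general A r hrpos hrcont
end
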